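/- arXiv:1809.07382 — 4 statements merged into one kernel-verified Lean document; each statement's English description precedes it below -/
import Mathlib

section
/- No r-regular graph with r odd admits a distance magic labeling, i.e., there is no bijection f from the vertices to {1,...,n} such that the sum of labels over the neighborhood of each vertex is a constant. -/
open scoped Classical
open Finset

/-- Weight of a vertex: sum of labels over its open neighborhood. -/
noncomputable def wsum {V : Type*} [Fintype V] (G : SimpleGraph V) (f : V → ℕ) (u : V) : ℕ :=
  ∑ v ∈ Finset.univ.filter (fun v => G.Adj u v), f v

/-- A graph is distance magic if some bijective labeling by 1,...,n has constant weights. -/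
def IsDistanceMagic {V : Type*} [Fintype V] (G : SimpleGraph V) : Prop :=
  ∃ (f : V ≃ Fin (Fintype.card V)) (c : ℕ),
    ∀ u, wsum G (fun v => (f v : ℕ) + 1) u = c

/-- `G` is `r`-regular. -/
def IsRegularDeg {V : Type*} [Fintype V] (G : SimpleGraph V) (r : ℕ) : Prop :=
  ∀ u : V, (Finset.univ.filter (fun v => G.Adj u v)).card = r

/-- `(a,d)`-distance antimagic: some bijective labeling by 1,...,n has weight set
`{a, a+d, ..., a+(n-1)d}`. -/
def IsDistAntimagic {V : Type*} [Fintype V] (G : SimpleGraph V) (a d : ℕ) : Prop :=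
  ∃ f : V ≃ Fin (Fintype.card V),
    Finset.image (fun u => wsum G (fun v => (f v : ℕ) + 1) u) Finset.univ
      = Finset.image (fun i : Fin (Fintype.card V) => a + (i : ℕ) * d) Finset.univ

/-- Circulant graph on `N` vertices with jumps `1,...,m` (so `H_{2m,N} = C_N^m`). -/
def circulant (N m : ℕ) : SimpleGraph (Fin N) :=
  SimpleGraph.fromRel (fun i j => ∃ k, 1 ≤ k ∧ k ≤ m ∧ ((i : ℕ) + k) % N = (j : ℕ))

/-- The graph `(K_{n-1} - M) + K_1`: vertex `0` joined to all, and vertices `1,...,n-1`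
forming a complete graph minus the perfect matching pairing `i` with `i + (n-1)/2 (mod n-1)`. -/
def calG (n : ℕ) : SimpleGraph (Fin n) :=
  SimpleGraph.fromRel (fun i j =>
    (i : ℕ) = 0 ∨ (j : ℕ) = 0 ∨
      ¬ (((i : ℕ) - 1 + (n - 1) / 2) % (n - 1) = (j : ℕ) - 1))

/-- Lexicographic product `G ∘ H`. -/
def lexProd {α β : Type*} (G : SimpleGraph α) (H : SimpleGraph β) : SimpleGraph (α × β) where
  Adj x y := G.Adj x.1 y.1 ∨ (x.1 = y.1 ∧ H.Adj x.2 y.2)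
  symm := ⟨by
    rintro ⟨a, b⟩ ⟨c, d⟩ (h | ⟨h1, h2⟩)
    · exact Or.inl h.symm
    · exact Or.inr ⟨h1.symm, h2.symm⟩⟩
  loopless := ⟨by
    rintro ⟨a, b⟩ (h | ⟨-, h⟩)
    · exact G.irrefl h
    · exact H.irrefl h⟩

/-- Direct (tensor) product `G × H`. -/
def tensorProd {α β : Type*} (G : SimpleGraph α) (H : SimpleGraph β) : SimpleGraph (α × β) where
  Adj x y := G.Adj x.1 y.1 ∧ H.Adj x.2 y.2
  symm := ⟨fun _ _ h => ⟨h.1.symm, h.2.symm⟩⟩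
  loopless := ⟨fun x h => G.irrefl h.1⟩

/-- The Harary graph `H_{3,n}`. -/
noncomputable def harary3 (n : ℕ) : SimpleGraph (Fin n) :=
  circulant n 1 ⊔ SimpleGraph.fromRel (fun i j =>
    if n % 2 = 0 then
      ∃ k, 1 ≤ k ∧ k ≤ n / 2 ∧ (i : ℕ) = k ∧ (j : ℕ) = (k + n / 2) % n
    else
      ((i : ℕ) = 0 ∧ ((j : ℕ) = (n - 1) / 2 ∨ (j : ℕ) = (n + 1) / 2)) ∨
      (∃ k, 1 ≤ k ∧ k < (n - 1) / 2 ∧ (i : ℕ) = k ∧ (j : ℕ) = (k + (n + 1) / 2) % n))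

/-- The Harary graph `H_{2n+1,2n+3}`: `C_{2n+3}^n` together with edges `v_0 v_{n+1}`,
`v_0 v_{n+2}` and `v_i v_{i+n+2}` for `1 ≤ i < n+1`. -/
def hararyOdd (n : ℕ) : SimpleGraph (Fin (2 * n + 3)) :=
  circulant (2 * n + 3) n ⊔ SimpleGraph.fromRel (fun i j =>
    ((i : ℕ) = 0 ∧ ((j : ℕ) = n + 1 ∨ (j : ℕ) = n + 2)) ∨
    (∃ k, 1 ≤ k ∧ k < n + 1 ∧ (i : ℕ) = k ∧ (j : ℕ) = k + n + 2))

/-- The Harary graph `H_{4n+1,4n+4}`: circulant with jumps `1,...,2n` and `2n+2`. -/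
def harary41 (n : ℕ) : SimpleGraph (Fin (4 * n + 4)) :=
  SimpleGraph.fromRel (fun i j =>
    ∃ k, ((1 ≤ k ∧ k ≤ 2 * n) ∨ k = 2 * n + 2) ∧ ((i : ℕ) + k) % (4 * n + 4) = (j : ℕ))

/-- The join `G + K_1`. -/
def joinK1 {V : Type*} (G : SimpleGraph V) : SimpleGraph (V ⊕ Unit) :=
  SimpleGraph.fromRel (fun x y =>
    match x, y with
    | Sum.inl a, Sum.inl b => G.Adj a b
    | Sum.inl _, Sum.inr _ => True
    | Sum.inr _, _ => False)

/-
Double counting the weights of an `r`-regular graph gives `n c = r (1 + ⋯ + n)`, i.e.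
`2 c = r (n + 1)`. By the handshake lemma `n r` is even, so `n` is even when `r` is odd; then
`r (n + 1)` is odd and cannot equal `2 c`.
-/

namespace SimpleGraph

variable {V : Type*} [Fintype V] {G : SimpleGraph V} {d : ℕ}

theorem IsRegularOfDegree.even_card_mul [DecidableRel G.Adj] (h : G.IsRegularOfDegree d) :
    Even (Fintype.card V * d) := by
  have hsum := G.sum_degrees_eq_twice_card_edges
  simp only [h.degree_eq, sum_const, card_univ, smul_eq_mul] at hsum
  exact ⟨#G.edgeFinset, by omega⟩

theorem IsRegularOfDegree.even_card_of_odd [DecidableRel G.Adj] (h : G.IsRegularOfDegree d)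
    (hd : Odd d) : Even (Fintype.card V) :=
  (Nat.even_mul.mp h.even_card_mul).resolve_right (Nat.not_even_iff_odd.mpr hd)

end SimpleGraph

section DistanceMagic

variable {V : Type*} [Fintype V] {G : SimpleGraph V} {r : ℕ}

theorem IsRegularDeg.isRegularOfDegree (hreg : IsRegularDeg G r) : G.IsRegularOfDegree r :=
  fun v => by rw [← hreg v, ← G.card_neighborFinset_eq_degree, G.neighborFinset_eq_filter]

theorem IsRegularDeg.sum_wsum (hreg : IsRegularDeg G r) (f : V → ℕ) :
    ∑ u, wsum G f u = r * ∑ v, f v := by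
  unfold wsum
  rw [sum_comm' (s' := fun v => univ.filter (G.Adj v)) (t' := univ)
    (fun u v => by simp [G.adj_comm]), mul_sum]
  exact sum_congr rfl fun v _ => by rw [sum_const, smul_eq_mul, ← hreg v]

theorem sum_equiv_fin_add_one_mul_two {n : ℕ} (e : V ≃ Fin n) :
    (∑ v, ((e v : ℕ) + 1)) * 2 = n * (n + 1) := by
  have hshift : ∑ i ∈ range n, (i + 1) = ∑ i ∈ range (n + 1), i := by
    rw [sum_range_succ', add_zero]
  rw [e.sum_comp (fun i : Fin n => (i : ℕ) + 1), Fin.sum_univ_eq_sum_range (· + 1), hshift,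
    sum_range_id_mul_two, Nat.add_sub_cancel, mul_comm]

theorem IsRegularDeg.two_mul_magic_constant [Nonempty V] (hreg : IsRegularDeg G r)
    (f : V ≃ Fin (Fintype.card V)) {c : ℕ} (hc : ∀ u, wsum G (fun v => (f v : ℕ) + 1) u = c) :
    2 * c = r * (Fintype.card V + 1) := by
  have htotal : Fintype.card V * c = r * ∑ v, ((f v : ℕ) + 1) := by
    simp only [← hreg.sum_wsum, hc, sum_const, card_univ, smul_eq_mul]
  refine Nat.eq_of_mul_eq_mul_left (Fintype.card_pos (α := V)) ?_
  calc Fintype.card V * (2 * c) = 2 * (r * ∑ v, ((f v : ℕ) + 1)) := by rw [← htotal]; ring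
    _ = r * ((∑ v, ((f v : ℕ) + 1)) * 2) := by ring
    _ = Fintype.card V * (r * (Fintype.card V + 1)) := by
      rw [sum_equiv_fin_add_one_mul_two]; ring

end DistanceMagic

/-- No r-regular graph with r odd is distance magic. -/
theorem no_odd_regular_distance_magic {V : Type*} [Fintype V] [Nonempty V]
    (G : SimpleGraph V) (r : ℕ) (hr : Odd r) (hreg : IsRegularDeg G r) :
    ¬ IsDistanceMagic G := by
  rintro ⟨f, c, hc⟩
  have hmagic : 2 * c = r * (Fintype.card V + 1) := hreg.two_mul_magic_constant f hc
  have hcard : Even (Fintype.card V) := hreg.isRegularOfDegree.even_card_of_odd hr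
  have hodd : Odd (r * (Fintype.card V + 1)) := hr.mul hcard.add_one
  rw [← hmagic] at hodd
  exact Nat.not_even_iff_odd.mpr hodd (even_two_mul c)
end

section
/- The graph H_{2n+1,2n+3} is distance magic with magic constant 2n² + 5n + 3, witnessed by the labeling f(v_i) = 2n+3−i for 0 ≤ i ≤ n+1 and f(v_i) = i−(n+1) for n+2 ≤ i ≤ 2n+2. -/
open scoped Classical
open Finset

/-!
The complement of `H_{2n+1,2n+3}` is the perfect matching `v_i v_{i+n+1}` on `v_1, …, v_{2n+2}`
together with the isolated vertex `v_0`. So every vertex `u` is adjacent to all vertices except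
itself and its mate `σ u` (with `σ v_0 = v_0`), and its weight is the total label sum
`(n+2)(2n+3)` minus the labels of `u` and `σ u`. The labeling gives `v_0` the label `2n+3` and
gives matched vertices labels adding up to `2n+3`, so every weight is `(n+2)(2n+3) - (2n+3)`.
-/

lemma wsum_add_sum_eq_sum {V : Type*} [Fintype V] (G : SimpleGraph V) (f : V → ℕ) (u : V)
    (s : Finset V) (hs : ∀ v, G.Adj u v ↔ v ∉ s) :
    wsum G f u + ∑ v ∈ s, f v = ∑ v, f v := by
  have hnbhd : univ.filter (fun v => G.Adj u v) = sᶜ := by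
    ext v
    simp [hs]
  rw [wsum, hnbhd, sum_compl_add_sum]

lemma sum_Icc_one_id_mul_two (m : ℕ) : (∑ k ∈ Icc 1 m, k) * 2 = m * (m + 1) := by
  induction m with
  | zero => rfl
  | succ m ih => rw [sum_Icc_succ_top (by omega), add_mul, ih]; ring

lemma exists_jump_iff {N m a b : ℕ} (hm : m < N) (ha : a < N) (hb : b < N) :
    (∃ k, 1 ≤ k ∧ k ≤ m ∧ (a + k) % N = b) ↔ (a < b ∧ b ≤ a + m) ∨ (b < a ∧ b + N ≤ a + m) := by
  constructor
  · rintro ⟨k, hk1, hkm, hab⟩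
    rcases Nat.lt_or_ge (a + k) N with h | h
    · rw [Nat.mod_eq_of_lt h] at hab; omega
    · rw [Nat.mod_eq_sub_mod h, Nat.mod_eq_of_lt (by omega)] at hab; omega
  · rintro (⟨hab, hba⟩ | ⟨hba, hab⟩)
    · exact ⟨b - a, by omega, by omega, by rw [Nat.add_sub_cancel' hab.le, Nat.mod_eq_of_lt hb]⟩
    · refine ⟨b + N - a, by omega, by omega, ?_⟩
      rw [Nat.add_sub_cancel' (by omega), Nat.add_mod_right, Nat.mod_eq_of_lt hb]

lemma circulant_adj_iff {N m : ℕ} (hm : m < N) (i j : Fin N) :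
    (circulant N m).Adj i j ↔ i ≠ j ∧
      ((i < j ∧ (j : ℕ) ≤ i + m) ∨ (j < i ∧ (j : ℕ) + N ≤ i + m) ∨
        (j < i ∧ (i : ℕ) ≤ j + m) ∨ (i < j ∧ (i : ℕ) + N ≤ j + m)) := by
  rw [circulant, SimpleGraph.fromRel_adj, exists_jump_iff hm i.isLt j.isLt,
    exists_jump_iff hm j.isLt i.isLt, Fin.lt_def, Fin.lt_def]
  tauto

/-- The mate of `v_i` in the complement of `H_{2n+1,2n+3}`; `v_0` is its own mate. -/
def hararyOddMate (n : ℕ) (u : Fin (2 * n + 3)) : Fin (2 * n + 3) :=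
  ⟨if (u : ℕ) = 0 then 0 else if (u : ℕ) ≤ n + 1 then u + (n + 1) else u - (n + 1), by
    split_ifs <;> omega⟩

lemma val_hararyOddMate (n : ℕ) (u : Fin (2 * n + 3)) :
    (hararyOddMate n u : ℕ) =
      if (u : ℕ) = 0 then 0 else if (u : ℕ) ≤ n + 1 then u + (n + 1) else u - (n + 1) :=
  rfl

def hararyOddLabel (n : ℕ) (i : Fin (2 * n + 3)) : ℕ :=
  if (i : ℕ) ≤ n + 1 then 2 * n + 3 - i else i - (n + 1)

lemma hararyOdd_adj_iff (n : ℕ) (u v : Fin (2 * n + 3)) :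
    (hararyOdd n).Adj u v ↔ v ∉ ({u, hararyOddMate n u} : Finset _) := by
  have hu := u.isLt
  have hv := v.isLt
  simp only [hararyOdd, SimpleGraph.sup_adj, circulant_adj_iff (show n < 2 * n + 3 by omega),
    SimpleGraph.fromRel_adj, existsAndEq, mem_insert, mem_singleton, Fin.ext_iff, val_hararyOddMate,
    Fin.lt_def, ne_eq, true_and]
  split_ifs <;> omega

lemma bijOn_hararyOddLabel (n : ℕ) :
    Set.BijOn (hararyOddLabel n) Set.univ (Set.Icc 1 (2 * n + 3)) := by
  refine ⟨fun i _ => ?_, fun i _ j _ hij => ?_, fun m hm => ?_⟩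
  · have := i.isLt
    simp only [hararyOddLabel, Set.mem_Icc]
    split_ifs <;> omega
  · have := i.isLt
    have := j.isLt
    simp only [hararyOddLabel] at hij
    ext
    split_ifs at hij <;> omega
  · obtain ⟨hm1, hm2⟩ := hm
    by_cases h : m ≤ n + 1
    · exact ⟨⟨m + n + 1, by omega⟩, trivial, by simp only [hararyOddLabel]; split_ifs <;> omega⟩
    · exact ⟨⟨2 * n + 3 - m, by omega⟩, trivial, by simp only [hararyOddLabel]; split_ifs <;> omega⟩

lemma sum_hararyOddLabel (n : ℕ) : ∑ i, hararyOddLabel n i = (n + 2) * (2 * n + 3) := by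
  obtain ⟨hmaps, hinj, hsurj⟩ := bijOn_hararyOddLabel n
  have hsum : ∑ i, hararyOddLabel n i = ∑ k ∈ Icc 1 (2 * n + 3), k :=
    sum_nbij (hararyOddLabel n) (fun i _ => by simpa using hmaps (Set.mem_univ i))
      (by simpa using hinj) (by simpa using hsurj) (fun _ _ => rfl)
  have hgauss := sum_Icc_one_id_mul_two (2 * n + 3)
  rw [hsum]
  linarith

lemma sum_hararyOddLabel_pair (n : ℕ) (u : Fin (2 * n + 3)) :
    ∑ v ∈ {u, hararyOddMate n u}, hararyOddLabel n v = 2 * n + 3 := by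
  have hlt := u.isLt
  by_cases hu : (u : ℕ) = 0
  · have hmate : hararyOddMate n u = u := Fin.ext (by simp [val_hararyOddMate, hu])
    rw [hmate, pair_eq_singleton, sum_singleton, hararyOddLabel, if_pos (by omega), hu,
      Nat.sub_zero]
  · have hmate : hararyOddMate n u ≠ u := by
      simp only [ne_eq, Fin.ext_iff, val_hararyOddMate, hu, ↓reduceIte]
      split_ifs <;> omega
    rw [sum_pair hmate.symm]
    simp only [hararyOddLabel, val_hararyOddMate, hu, ↓reduceIte]
    split_ifs <;> omega

/-- H_{2n+1,2n+3} is distance magic with constant 2n^2+5n+3, witnessed by the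
labeling f(v_i) = 2n+3-i for i ≤ n+1 and f(v_i) = i-(n+1) for n+2 ≤ i ≤ 2n+2. -/
theorem hararyOdd_distance_magic (n : ℕ) :
    Set.BijOn (fun i : Fin (2 * n + 3) =>
        if (i : ℕ) ≤ n + 1 then 2 * n + 3 - (i : ℕ) else (i : ℕ) - (n + 1))
      Set.univ (Set.Icc 1 (2 * n + 3)) ∧
    (∀ u, wsum (hararyOdd n)
        (fun i => if (i : ℕ) ≤ n + 1 then 2 * n + 3 - (i : ℕ) else (i : ℕ) - (n + 1)) u
      = 2 * n ^ 2 + 5 * n + 3) := by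
  refine ⟨bijOn_hararyOddLabel n, fun u => ?_⟩
  have hweight := wsum_add_sum_eq_sum (hararyOdd n) (hararyOddLabel n) u _
    (hararyOdd_adj_iff n u)
  rw [sum_hararyOddLabel_pair, sum_hararyOddLabel] at hweight
  change wsum (hararyOdd n) (hararyOddLabel n) u = _
  linarith
end

section
/- Let G be a 2n-regular distance magic graph on m vertices containing an induced subgraph H isomorphic to K_{2n} minus a perfect matching, such that under the distance magic labeling f of G the two labels on each removed matching pair of H sum to m+1. Then the graph G† obtained by deleting all edges of H and joining 2n−2 new vertices to all vertices of H is a 2n-regular distance magic graph on m + 2n − 2 vertices, with magic constant 2n² + mn − n under the labeling f†(x) = f(x) + n − 1 for x ∈ V(G) and f†(u_j) = j+1 for 0 ≤ j ≤ n−2, f†(u_j) = m + j + 1 for n−1 ≤ j ≤ 2n−3. -/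
open scoped Classical
open Finset

/-!
In `G†` a vertex outside `H` keeps its neighbourhood, a new vertex sees exactly `V(H)`, and a
vertex of `H` trades its neighbours inside `H` (all of `H` but itself and its twin) for the
`2n - 2` new vertices. Double counting `∑ weights = 2n ∑ labels` gives `c = n(m + 1)`. After
shifting the old labels by `n - 1` every twin pair carries `p = m + 2n - 1`, and all weights
equal `A = n p`: an outside vertex gets `c + 2n(n - 1) = A`; a new vertex gets the label sum of
`H`, which consists of `n` twin pairs; a vertex of `H` gets `A - (A - p)` from outside `H` plus
the new labels, which pair up as `j + 1` and `m + 2n - 2 - j` into `n - 1` further sums `p`.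
Regularity is the same count with every label equal to `1`.
-/

namespace DistanceMagic

theorem two_nsmul_sum_eq_card_nsmul {ι M : Type*} [Fintype ι] [AddCommMonoid M]
    (σ : Equiv.Perm ι) {g : ι → M} {s : M} (h : ∀ i, g i + g (σ i) = s) :
    2 • ∑ i, g i = Fintype.card ι • s := by
  rw [two_nsmul]
  nth_rewrite 2 [← Equiv.sum_comp σ g]
  rw [← Finset.sum_add_distrib, Finset.sum_congr rfl fun i _ => h i, Finset.sum_const,
    Finset.card_univ]

theorem two_mul_sum_val_add_one (N : ℕ) : 2 * ∑ i : Fin N, ((i : ℕ) + 1) = N * (N + 1) := by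
  simpa using two_nsmul_sum_eq_card_nsmul Fin.revPerm (g := fun i : Fin N => (i : ℕ) + 1)
    (s := N + 1) fun i => by simp only [Fin.revPerm_apply, Fin.val_rev]; omega

variable {V : Type*}

def replacementGraph (G : SimpleGraph V) (S : Set V) (W : Type*) : SimpleGraph (V ⊕ W) :=
  SimpleGraph.fromRel fun x y =>
    match x, y with
    | .inl a, .inl b => G.Adj a b ∧ ¬(a ∈ S ∧ b ∈ S)
    | .inl a, .inr _ => a ∈ S
    | .inr _, _ => False

section replacementGraph

variable {W : Type*} {G : SimpleGraph V} {S : Set V}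

@[simp]
theorem replacementGraph_adj_inl_inl {a b : V} :
    (replacementGraph G S W).Adj (.inl a) (.inl b) ↔ G.Adj a b ∧ ¬(a ∈ S ∧ b ∈ S) := by
  simp only [replacementGraph, SimpleGraph.fromRel_adj, ne_eq, Sum.inl.injEq]
  constructor
  · rintro ⟨-, h | ⟨hba, hS⟩⟩
    · exact h
    · exact ⟨hba.symm, fun h => hS ⟨h.2, h.1⟩⟩
  · exact fun h => ⟨G.ne_of_adj h.1, .inl h⟩

@[simp]
theorem replacementGraph_adj_inl_inr {a : V} {w : W} :
    (replacementGraph G S W).Adj (.inl a) (.inr w) ↔ a ∈ S := by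
  simp [replacementGraph]

@[simp]
theorem replacementGraph_adj_inr_inl {a : V} {w : W} :
    (replacementGraph G S W).Adj (.inr w) (.inl a) ↔ a ∈ S := by
  simp [replacementGraph]

@[simp]
theorem replacementGraph_not_adj_inr_inr {w w' : W} :
    ¬(replacementGraph G S W).Adj (.inr w) (.inr w') := by
  simp [replacementGraph]

end replacementGraph

def replacementLabel (ℓ : V → ℕ) (n m k : ℕ) : V ⊕ Fin k → ℕ
  | .inl v => ℓ v + n
  | .inr j => if (j : ℕ) ≤ n - 2 then j + 1 else m + j + 1

theorem sum_replacementLabel_inr (ℓ : V → ℕ) {n : ℕ} (hn : 1 ≤ n) (m : ℕ) :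
    ∑ j : Fin (2 * n - 2), replacementLabel ℓ n m (2 * n - 2) (.inr j)
      = (n - 1) * (m + 2 * n - 1) := by
  have h := two_nsmul_sum_eq_card_nsmul Fin.revPerm (s := m + 2 * n - 1)
    (g := fun j : Fin (2 * n - 2) => replacementLabel ℓ n m _ (.inr j)) fun j => by
      have := j.isLt
      simp only [replacementLabel, Fin.revPerm_apply, Fin.val_rev]
      split_ifs <;> omega
  rw [smul_eq_mul, smul_eq_mul, Fintype.card_fin] at h
  refine Nat.eq_of_mul_eq_mul_left two_pos (h.trans ?_)
  rw [show 2 * n - 2 = 2 * (n - 1) by omega, mul_assoc]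

theorem adj_iff_ne_and_ne_rev {G : SimpleGraph V} {N : ℕ} {ψ : Fin N → V}
    (hsub : ∀ i j : Fin N, i ≠ j → (G.Adj (ψ i) (ψ j) ↔ (i : ℕ) + (j : ℕ) ≠ N - 1))
    (i j : Fin N) : G.Adj (ψ i) (ψ j) ↔ j ≠ i ∧ j ≠ i.rev := by
  by_cases hij : i = j
  · subst hij
    simp
  · rw [hsub i j hij, Fin.ne_iff_vne, Fin.ne_iff_vne, Fin.val_rev]
    have := j.isLt
    omega

theorem rev_ne_self {n : ℕ} (i : Fin (2 * n)) : i.rev ≠ i := by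
  rw [Fin.ne_iff_vne, Fin.val_rev]
  omega

variable [Fintype V]

theorem isRegularDeg_iff_wsum_one {G : SimpleGraph V} {r : ℕ} :
    IsRegularDeg G r ↔ ∀ u, wsum G (fun _ => 1) u = r := by
  simp only [IsRegularDeg, wsum, Finset.card_eq_sum_ones]

theorem wsum_add_const {G : SimpleGraph V} {r : ℕ} (hreg : IsRegularDeg G r) (g : V → ℕ)
    (k : ℕ) (u : V) : wsum G (fun v => g v + k) u = wsum G g u + r * k := by
  rw [wsum, Finset.sum_add_distrib, Finset.sum_const, hreg u, smul_eq_mul, wsum]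

theorem sum_wsum_eq_mul_sum {G : SimpleGraph V} {r : ℕ} (hreg : IsRegularDeg G r)
    (g : V → ℕ) : ∑ u, wsum G g u = r * ∑ v, g v := by
  simp only [wsum, Finset.sum_filter]
  rw [Finset.sum_comm, Finset.mul_sum]
  refine Finset.sum_congr rfl fun v _ => ?_
  rw [← Finset.sum_filter, Finset.sum_const, smul_eq_mul, ← hreg v]
  simp only [SimpleGraph.adj_comm]

theorem two_mul_magic_constant {G : SimpleGraph V} {r : ℕ} (hreg : IsRegularDeg G r)
    (hpos : 0 < Fintype.card V) (f : V ≃ Fin (Fintype.card V)) {c : ℕ}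
    (hmagic : ∀ u, wsum G (fun v => (f v : ℕ) + 1) u = c) :
    2 * c = r * (Fintype.card V + 1) := by
  have hsum := sum_wsum_eq_mul_sum hreg fun v => (f v : ℕ) + 1
  rw [Finset.sum_congr rfl fun u _ => hmagic u, Finset.sum_const, Finset.card_univ,
    smul_eq_mul, f.sum_comp fun i => (i : ℕ) + 1] at hsum
  refine Nat.eq_of_mul_eq_mul_left hpos ?_
  calc Fintype.card V * (2 * c) = r * (2 * ∑ i : Fin (Fintype.card V), ((i : ℕ) + 1)) := by
        rw [mul_left_comm, hsum]; ring
    _ = _ := by rw [two_mul_sum_val_add_one]; ring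

theorem wsum_sum_type {W : Type*} [Fintype W] (H : SimpleGraph (V ⊕ W)) (g : V ⊕ W → ℕ)
    (u : V ⊕ W) :
    wsum H g u = ∑ v ∈ univ.filter (fun v => H.Adj u (.inl v)), g (.inl v)
      + ∑ w ∈ univ.filter (fun w => H.Adj u (.inr w)), g (.inr w) := by
  simp only [wsum, Finset.sum_filter, Fintype.sum_sum_type]

section replacementGraph

variable {W : Type*} [Fintype W] {G : SimpleGraph V} {S : Set V}

theorem wsum_replacementGraph_inr [DecidablePred (· ∈ S)] (g : V ⊕ W → ℕ) (w : W) :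
    wsum (replacementGraph G S W) g (.inr w) = ∑ v ∈ univ.filter (· ∈ S), g (.inl v) := by
  simp [wsum_sum_type]

theorem wsum_replacementGraph_inl_of_notMem (g : V ⊕ W → ℕ) {a : V} (ha : a ∉ S) :
    wsum (replacementGraph G S W) g (.inl a) = wsum G (g ∘ .inl) a := by
  rw [wsum_sum_type]
  simp [ha, wsum]

theorem wsum_replacementGraph_inl_of_mem [DecidablePred (· ∈ S)] (g : V ⊕ W → ℕ) {a : V}
    (ha : a ∈ S) :
    wsum (replacementGraph G S W) g (.inl a)
      = ∑ v ∈ univ.filter (fun v => G.Adj a v ∧ v ∉ S), g (.inl v) + ∑ w, g (.inr w) := by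
  simp [wsum_sum_type, ha]

end replacementGraph

section twins

variable {ι W : Type*} [Fintype ι] [Fintype W] {G : SimpleGraph V} {ψ : ι → V}

theorem sum_filter_mem_range (hψ : Function.Injective ψ) (h : V → ℕ) :
    ∑ v ∈ univ.filter (· ∈ Set.range ψ), h v = ∑ j, h (ψ j) := by
  rw [← Finset.sum_image hψ.injOn]
  congr 1
  ext v
  simp

variable {σ : ι → ι} (hψ : Function.Injective ψ)
  (hadj : ∀ i j, G.Adj (ψ i) (ψ j) ↔ j ≠ i ∧ j ≠ σ i)
include hψ hadj

theorem sum_filter_adj_mem_range_add_twins {i : ι} (hσi : σ i ≠ i) (h : V → ℕ) :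
    ∑ v ∈ univ.filter (fun v => G.Adj (ψ i) v ∧ v ∈ Set.range ψ), h v
      + (h (ψ i) + h (ψ (σ i))) = ∑ j, h (ψ j) := by
  have hnbrs : univ.filter (fun v => G.Adj (ψ i) v ∧ v ∈ Set.range ψ)
      = (univ.filter fun j => j ≠ i ∧ j ≠ σ i).image ψ := by
    ext v
    simp only [Finset.mem_filter, Finset.mem_univ, true_and, Finset.mem_image, Set.mem_range]
    constructor
    · rintro ⟨hv, j, rfl⟩
      exact ⟨j, (hadj i j).1 hv, rfl⟩
    · rintro ⟨j, hj, rfl⟩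
      exact ⟨(hadj i j).2 hj, j, rfl⟩
  have htwins : univ.filter (fun j => ¬(j ≠ i ∧ j ≠ σ i)) = {i, σ i} := by
    ext j
    simp only [Finset.mem_filter, Finset.mem_univ, true_and, Finset.mem_insert,
      Finset.mem_singleton]
    tauto
  rw [hnbrs, Finset.sum_image hψ.injOn, ← Finset.sum_pair (f := fun j => h (ψ j)) hσi.symm,
    ← htwins, Finset.sum_filter_add_sum_filter_not]

theorem wsum_replacementGraph_inl_add_sum {i : ι} (hσi : σ i ≠ i) (g : V ⊕ W → ℕ) :
    wsum (replacementGraph G (Set.range ψ) W) g (.inl (ψ i)) + ∑ j, g (.inl (ψ j))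
      = wsum G (g ∘ .inl) (ψ i) + (g (.inl (ψ i)) + g (.inl (ψ (σ i))))
        + ∑ w, g (.inr w) := by
  rw [wsum_replacementGraph_inl_of_mem g (Set.mem_range_self i),
    ← sum_filter_adj_mem_range_add_twins hψ hadj hσi fun v => g (.inl v), wsum,
    ← Finset.sum_filter_add_sum_filter_not (univ.filter (G.Adj (ψ i))) (· ∈ Set.range ψ),
    Finset.filter_filter, Finset.filter_filter]
  simp only [Function.comp_apply]
  ring

theorem wsum_replacementGraph_eq (hσ : ∀ i, σ i ≠ i) {g : V ⊕ W → ℕ} {A : ℕ}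
    (hG : ∀ a, wsum G (g ∘ .inl) a = A) (hsum : ∑ i, g (.inl (ψ i)) = A)
    (htwins : ∀ i, g (.inl (ψ i)) + g (.inl (ψ (σ i))) + ∑ w, g (.inr w) = A) :
    ∀ u, wsum (replacementGraph G (Set.range ψ) W) g u = A := by
  rintro (a | w)
  · by_cases ha : a ∈ Set.range ψ
    · obtain ⟨i, rfl⟩ := ha
      have := wsum_replacementGraph_inl_add_sum hψ hadj (hσ i) g
      rw [hsum, hG, add_assoc, htwins] at this
      omega
    · rw [wsum_replacementGraph_inl_of_notMem g ha, hG]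
  · rw [wsum_replacementGraph_inr, sum_filter_mem_range hψ, hsum]

end twins

theorem bijOn_replacementLabel {n m : ℕ} (hn : 1 ≤ n) (f : V ≃ Fin (Fintype.card V))
    (hV : Fintype.card V = m) :
    Set.BijOn (replacementLabel (fun v => (f v : ℕ)) n m (2 * n - 2)) Set.univ
      (Set.Icc 1 (m + 2 * n - 2)) := by
  have hf : ∀ v, (f v : ℕ) < m := fun v => hV ▸ (f v).isLt
  refine ⟨?_, ?_, ?_⟩
  · rintro (v | j) -
    · have := hf v
      simp only [replacementLabel, Set.mem_Icc]
      omega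
    · have := j.isLt
      simp only [replacementLabel, Set.mem_Icc]
      split_ifs <;> omega
  · rintro (v | j) - (w | j') - h <;> simp only [replacementLabel] at h
    · exact congrArg _ (f.injective (Fin.ext (by omega)))
    · have := hf v; have := j'.isLt; split_ifs at h <;> omega
    · have := hf w; have := j.isLt; split_ifs at h <;> omega
    · exact congrArg _ (Fin.ext (by split_ifs at h <;> omega))
  · rintro t ⟨ht1, ht2⟩
    by_cases hlow : t < n
    · refine ⟨.inr ⟨t - 1, by omega⟩, trivial, ?_⟩
      simp only [replacementLabel]
      rw [if_pos (by omega)]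
      omega
    by_cases hmid : t < m + n
    · refine ⟨.inl (f.symm ⟨t - n, by omega⟩), trivial, ?_⟩
      simp only [replacementLabel, Equiv.apply_symm_apply]
      omega
    · refine ⟨.inr ⟨t - m - 1, by omega⟩, trivial, ?_⟩
      simp only [replacementLabel]
      rw [if_neg (by omega)]
      omega

section construction

variable {G : SimpleGraph V} {n : ℕ} {ψ : Fin (2 * n) → V} (hψ : Function.Injective ψ)
  (hadj : ∀ i j, G.Adj (ψ i) (ψ j) ↔ j ≠ i ∧ j ≠ i.rev)
include hψ hadj

theorem isRegularDeg_replacementGraph (hn : 1 ≤ n) (hreg : IsRegularDeg G (2 * n)) :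
    IsRegularDeg (replacementGraph G (Set.range ψ) (Fin (2 * n - 2))) (2 * n) := by
  rw [isRegularDeg_iff_wsum_one] at hreg ⊢
  refine wsum_replacementGraph_eq hψ hadj rev_ne_self hreg (by simp) fun i => ?_
  simp only [Finset.sum_const, Finset.card_univ, Fintype.card_fin, smul_eq_mul]
  omega

theorem wsum_replacementGraph_replacementLabel (hn : 1 ≤ n) {m c : ℕ}
    (hV : Fintype.card V = m) (hreg : IsRegularDeg G (2 * n)) (f : V ≃ Fin (Fintype.card V))
    (hmagic : ∀ u, wsum G (fun v => (f v : ℕ) + 1) u = c)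
    (htwin : ∀ i, ((f (ψ i) : ℕ) + 1) + ((f (ψ i.rev) : ℕ) + 1) = m + 1)
    (u : V ⊕ Fin (2 * n - 2)) :
    wsum (replacementGraph G (Set.range ψ) (Fin (2 * n - 2)))
      (replacementLabel (fun v => (f v : ℕ)) n m (2 * n - 2)) u = 2 * n ^ 2 + m * n - n := by
  have hm : 2 * n ≤ m := by simpa [hV] using Fintype.card_le_of_injective ψ hψ
  have hc : 2 * c = 2 * n * (m + 1) := by
    simpa [hV] using two_mul_magic_constant hreg (by omega) f hmagic
  have hH : 2 * ∑ i, ((f (ψ i) : ℕ) + 1) = 2 * n * (m + 1) := by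
    simpa using two_nsmul_sum_eq_card_nsmul Fin.revPerm htwin
  have hnew := sum_replacementLabel_inr (fun v => (f v : ℕ)) hn m
  have hlabel : ∀ v, replacementLabel (fun v => (f v : ℕ)) n m (2 * n - 2) (.inl v)
      = ((f v : ℕ) + 1) + (n - 1) := fun v => by simp only [replacementLabel]; omega
  -- writing `n = q + 1` turns the truncated subtractions into polynomial identities
  obtain ⟨q, rfl⟩ : ∃ q, n = q + 1 := ⟨n - 1, by omega⟩
  simp only [Nat.add_sub_cancel] at hlabel hnew
  rw [show m + 2 * (q + 1) - 1 = m + 2 * q + 1 by omega] at hnew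
  have hA : 2 * (q + 1) ^ 2 + m * (q + 1) - (q + 1) = (q + 1) * (m + 1) + 2 * (q + 1) * q :=
    Nat.sub_eq_of_eq_add (by ring)
  rw [hA]
  refine wsum_replacementGraph_eq hψ hadj rev_ne_self (fun a => ?_) ?_ (fun i => ?_) u
  · rw [show _ ∘ Sum.inl = _ from funext hlabel, wsum_add_const hreg, hmagic]
    linarith
  · rw [Finset.sum_congr rfl fun i _ => hlabel (ψ i), Finset.sum_add_distrib, Finset.sum_const,
      Finset.card_univ, Fintype.card_fin, smul_eq_mul]
    linarith
  · have := htwin i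
    rw [hlabel, hlabel, hnew]
    linarith

end construction

end DistanceMagic

open DistanceMagic

/-- the replacement construction on a 2n-regular distance magic graph
containing K_{2n} minus a perfect matching with twin label-sums m+1. -/
theorem replacement_construction {V : Type*} [Fintype V] (n m : ℕ) (hn : 2 ≤ n)
    (hV : Fintype.card V = m) (G : SimpleGraph V) (hreg : IsRegularDeg G (2 * n))
    (f : V ≃ Fin (Fintype.card V)) (c : ℕ)
    (hmagic : ∀ u, wsum G (fun v => (f v : ℕ) + 1) u = c)
    (ψ : Fin (2 * n) → V) (hinj : Function.Injective ψ)
    (hsub : ∀ i j : Fin (2 * n), i ≠ j →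
      (G.Adj (ψ i) (ψ j) ↔ (i : ℕ) + (j : ℕ) ≠ 2 * n - 1))
    (htwin : ∀ i j : Fin (2 * n), (i : ℕ) + (j : ℕ) = 2 * n - 1 →
      ((f (ψ i) : ℕ) + 1) + ((f (ψ j) : ℕ) + 1) = m + 1) :
    letI Gd : SimpleGraph (V ⊕ Fin (2 * n - 2)) := SimpleGraph.fromRel (fun x y =>
      match x, y with
      | Sum.inl a, Sum.inl b => G.Adj a b ∧ ¬(a ∈ Set.range ψ ∧ b ∈ Set.range ψ)
      | Sum.inl a, Sum.inr _ => a ∈ Set.range ψ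
      | Sum.inr _, _ => False)
    letI fd : V ⊕ Fin (2 * n - 2) → ℕ := fun x =>
      match x with
      | Sum.inl v => (f v : ℕ) + n
      | Sum.inr j => if (j : ℕ) ≤ n - 2 then (j : ℕ) + 1 else m + (j : ℕ) + 1
    Fintype.card (V ⊕ Fin (2 * n - 2)) = m + 2 * n - 2 ∧
    IsRegularDeg Gd (2 * n) ∧
    Set.BijOn fd Set.univ (Set.Icc 1 (m + 2 * n - 2)) ∧
    (∀ u, wsum Gd fd u = 2 * n ^ 2 + m * n - n) := by
  have hn1 : 1 ≤ n := by omega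
  have hadj := adj_iff_ne_and_ne_rev hsub
  -- the inline graph and labelling of the statement use their own matchers, so they agree with
  -- `replacementGraph` and `replacementLabel` only after case analysis on the vertices
  refine ⟨by simp [hV]; omega, ?_, ?_, fun u => ?_⟩
  · convert isRegularDeg_replacementGraph hinj hadj hn1 hreg using 2
    ext (a | w) (b | w') <;> rfl
  · convert bijOn_replacementLabel hn1 f hV using 1
    ext (v | j) <;> rfl
  · convert wsum_replacementGraph_replacementLabel hinj hadj hn1 hV hreg f hmagic
      (fun i => htwin i i.rev (by have := i.isLt; rw [Fin.val_rev]; omega)) u using 2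
    · ext (a | w) (b | w') <;> rfl
    · ext (v | j) <;> rfl
end

section
/- For every n ≥ 3 odd, the lexicographic product G ∘ C_4 is not distance magic, where G = (K_{n−1} − M) + K_1 (the join of K_1 with K_{n−1} minus a perfect matching M). -/
open scoped Classical
open Finset

/-! Fix a magic labeling `L` of `G ∘ C₄` and put `t g = L (g, 0) + L (g, 2)`. The vertices
`(g, 0)` and `(g, 1)` share their neighbours outside the fibre over `g`, so equal weights give
`L (g, 1) + L (g, 3) = t g`; every fibre thus carries `2 t g`, and the magic constant is
`c = 2 ∑_{g' ~ g} t g' + t g`. In `G = (K_{n-1} - M) + K₁` the apex `v₀` sees everything and any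
other vertex misses only its partner, which turns these equations into `3 t g = t v₀` for
`g ≠ v₀`. Summing, `(n + 2) t v₀ = 3 n (4 n + 1)`, whereas `t v₀ ≤ 8 n - 1` as a sum of two
distinct labels; the two are incompatible for `n ≥ 3`. -/

theorem circulant_one_adj_iff {N : ℕ} (i j : Fin N) :
    (circulant N 1).Adj i j ↔ i ≠ j ∧ ((i + 1) % N = j ∨ (j + 1) % N = i) := by
  have hjump : ∀ a b : ℕ, (∃ k, 1 ≤ k ∧ k ≤ 1 ∧ (a + k) % N = b) ↔ (a + 1) % N = b :=
    fun a b => ⟨fun ⟨k, h1, h2, h⟩ => by rwa [show k = 1 by omega] at h,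
      fun h => ⟨1, le_rfl, le_rfl, h⟩⟩
  rw [circulant, SimpleGraph.fromRel_adj, hjump, hjump]

theorem circulant_four_one_neighbors_zero :
    univ.filter ((circulant 4 1).Adj 0) = {1, 3} := by
  ext v
  rw [mem_filter, circulant_one_adj_iff]
  fin_cases v <;> simp

theorem circulant_four_one_neighbors_one :
    univ.filter ((circulant 4 1).Adj 1) = {0, 2} := by
  ext v
  rw [mem_filter, circulant_one_adj_iff]
  fin_cases v <;> simp

theorem two_mul_sum_equiv_fin_succ {V : Type*} [Fintype V] (f : V ≃ Fin (Fintype.card V)) :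
    2 * ∑ v, ((f v : ℕ) + 1) = Fintype.card V * (Fintype.card V + 1) := by
  rw [Equiv.sum_comp f (fun i => (i : ℕ) + 1), Fin.sum_univ_eq_sum_range (· + 1), mul_comm,
    sum_add_distrib, sum_const, card_range, smul_eq_mul, add_mul, sum_range_id_mul_two]
  obtain _ | m := Fintype.card V
  · rfl
  · rw [Nat.add_sub_cancel]
    ring

theorem wsum_lexProd {α β : Type*} [Fintype α] [Fintype β] (G : SimpleGraph α)
    (H : SimpleGraph β) (L : α × β → ℕ) (g : α) (h : β) :
    wsum (lexProd G H) L (g, h) =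
      ∑ g' ∈ univ.filter (G.Adj g), ∑ h', L (g', h') + ∑ h' ∈ univ.filter (H.Adj h), L (g, h') := by
  have hsplit : univ.filter ((lexProd G H).Adj (g, h)) =
      (univ.filter (G.Adj g)) ×ˢ univ ∪ {g} ×ˢ univ.filter (H.Adj h) := by
    ext ⟨g', h'⟩
    simp only [mem_filter, mem_univ, true_and, mem_union, mem_product, and_true, mem_singleton]
    exact or_congr_right (and_congr_left' eq_comm)
  have hdisj : Disjoint ((univ.filter (G.Adj g)) ×ˢ univ) ({g} ×ˢ univ.filter (H.Adj h)) := by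
    simp only [disjoint_left, mem_product, mem_filter, mem_univ, true_and, and_true,
      mem_singleton, not_and]
    rintro ⟨g', h'⟩ hadj rfl
    exact absurd hadj G.irrefl
  rw [wsum, hsplit, sum_union hdisj, sum_product, sum_product, sum_singleton]

theorem Fin.val_add_val_add_three_le_of_ne {N : ℕ} {x y : Fin N} (hxy : x ≠ y) :
    (x : ℕ) + y + 3 ≤ 2 * N := by
  have := Fin.val_ne_of_ne hxy
  omega

section LexProdCycleFour

variable {α : Type*} [Fintype α] {G : SimpleGraph α} {L : α × Fin 4 → ℕ} {c : ℕ}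

theorem sum_fiber_eq_of_wsum_eq (hc : ∀ u, wsum (lexProd G (circulant 4 1)) L u = c) (g : α) :
    ∑ h, L (g, h) = 2 * (L (g, 0) + L (g, 2)) := by
  have h0 := hc (g, 0)
  have h1 := hc (g, 1)
  rw [wsum_lexProd, circulant_four_one_neighbors_zero, sum_pair (by decide)] at h0
  rw [wsum_lexProd, circulant_four_one_neighbors_one, sum_pair (by decide)] at h1
  rw [Fin.sum_univ_four]
  omega

theorem two_mul_sum_adj_add_eq_of_wsum_eq
    (hc : ∀ u, wsum (lexProd G (circulant 4 1)) L u = c) (g : α) :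
    2 * ∑ g' ∈ univ.filter (G.Adj g), (L (g', 0) + L (g', 2)) + (L (g, 0) + L (g, 2)) = c := by
  have h1 := hc (g, 1)
  rw [wsum_lexProd, circulant_four_one_neighbors_one, sum_pair (by decide),
    sum_congr rfl fun g' _ => sum_fiber_eq_of_wsum_eq hc g', ← mul_sum] at h1
  exact h1

end LexProdCycleFour

section ConeOverCocktailParty

variable {V : Type*} [Fintype V] [DecidableEq V] {G : SimpleGraph V} {v₀ : V} {t : V → ℕ} {c : ℕ}

theorem three_mul_eq_of_two_mul_sum_adj_add_eq
    (hv₀ : univ.filter (G.Adj v₀) = {v₀}ᶜ)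
    (hmate : ∀ g ≠ v₀, ∃ g' ≠ g, univ.filter (G.Adj g) = {g, g'}ᶜ)
    (ht : ∀ g, 2 * ∑ g' ∈ univ.filter (G.Adj g), t g' + t g = c) {g : V} (hg : g ≠ v₀) :
    3 * t g = t v₀ := by
  obtain ⟨g', hg'g, hNg⟩ := hmate g hg
  have hnadj : ¬ G.Adj g g' := by
    simpa using (by simp [hNg] : g' ∉ univ.filter (G.Adj g))
  have hg'v₀ : g' ≠ v₀ := by
    rintro rfl
    have hadj : g ∈ univ.filter (G.Adj g') := by simp [hv₀, hg]
    exact hnadj ((mem_filter_univ _).mp hadj).symm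
  obtain ⟨g'', -, hNg'⟩ := hmate g' hg'v₀
  -- non-adjacency is symmetric, so `g` is the partner of its partner
  obtain rfl : g = g'' := by
    have : g ∉ univ.filter (G.Adj g') := by simpa using fun h => hnadj h.symm
    simpa [hNg', hg'g.symm] using this
  have e₀ := hv₀ ▸ ht v₀
  have e₁ := hNg ▸ ht g
  have e₂ := hNg' ▸ ht g'
  have s₀ := sum_compl_add_sum {v₀} t
  have s₁ := sum_compl_add_sum {g, g'} t
  have s₂ := sum_compl_add_sum {g', g} t
  rw [sum_singleton] at s₀
  rw [sum_pair hg'g.symm] at s₁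
  rw [sum_pair hg'g] at s₂
  -- `c = 2 S - t v₀ = 2 S - t g - 2 t g' = 2 S - t g' - 2 t g` with `S = ∑ t`
  omega

theorem three_mul_sum_eq_of_two_mul_sum_adj_add_eq
    (hv₀ : univ.filter (G.Adj v₀) = {v₀}ᶜ)
    (hmate : ∀ g ≠ v₀, ∃ g' ≠ g, univ.filter (G.Adj g) = {g, g'}ᶜ)
    (ht : ∀ g, 2 * ∑ g' ∈ univ.filter (G.Adj g), t g' + t g = c) :
    3 * ∑ g, t g = (Fintype.card V + 2) * t v₀ := by
  have hrest : ∑ g ∈ {v₀}ᶜ, 3 * t g = (Fintype.card V - 1) * t v₀ := by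
    rw [sum_congr rfl fun g hg =>
      three_mul_eq_of_two_mul_sum_adj_add_eq hv₀ hmate ht (by simpa using hg),
      sum_const, card_compl, card_singleton, smul_eq_mul]
  have hpos : 0 < Fintype.card V := Fintype.card_pos_iff.mpr ⟨v₀⟩
  rw [← sum_compl_add_sum {v₀}, sum_singleton, mul_add, mul_sum, hrest, ← add_mul]
  congr 1
  omega

end ConeOverCocktailParty

theorem lexProd_circulant_four_not_isDistanceMagic {V : Type*} [Fintype V] [DecidableEq V]
    (G : SimpleGraph V) (v₀ : V) (hcard : 3 ≤ Fintype.card V) (hv₀ : univ.filter (G.Adj v₀) = {v₀}ᶜ)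
    (hmate : ∀ g ≠ v₀, ∃ g' ≠ g, univ.filter (G.Adj g) = {g, g'}ᶜ) :
    ¬ IsDistanceMagic (lexProd G (circulant 4 1)) := by
  rintro ⟨f, c, hc⟩
  set L : V × Fin 4 → ℕ := fun u => (f u : ℕ) + 1
  set t : V → ℕ := fun g => L (g, 0) + L (g, 2)
  have hcard₄ : Fintype.card (V × Fin 4) = 4 * Fintype.card V := by simp [mul_comm]
  have hS : 3 * ∑ g, t g = (Fintype.card V + 2) * t v₀ :=
    three_mul_sum_eq_of_two_mul_sum_adj_add_eq hv₀ hmate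
      (two_mul_sum_adj_add_eq_of_wsum_eq hc)
  have htotal : 2 * (2 * ∑ g, t g) = 4 * Fintype.card V * (4 * Fintype.card V + 1) := by
    rw [mul_sum, ← sum_congr rfl fun g _ => sum_fiber_eq_of_wsum_eq hc g,
      ← Fintype.sum_prod_type', ← hcard₄]
    exact two_mul_sum_equiv_fin_succ f
  have hbound : t v₀ + 1 ≤ 8 * Fintype.card V := by
    have hne : (v₀, (0 : Fin 4)) ≠ (v₀, 2) := by simp
    have := Fin.val_add_val_add_three_le_of_ne (f.injective.ne hne)
    simp only [t, L]
    omega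
  -- with `m = Fintype.card V`: `(m + 2) t v₀ = 3 m (4 m + 1) > (m + 2) (8 m - 1)` as `m ≥ 3`
  nlinarith

theorem add_half_mod_eq_iff {h a b : ℕ} (ha : a < 2 * h) (hb : b < 2 * h) :
    (a + h) % (2 * h) = b ↔ a + h = b ∨ a = b + h := by
  rcases lt_or_ge a h with hah | hah
  · rw [Nat.mod_eq_of_lt (by omega)]
    omega
  · rw [Nat.mod_eq_sub_mod (by omega), Nat.mod_eq_of_lt (by omega)]
    omega

theorem calG_adj_iff_of_ne_zero {h : ℕ} {i j : Fin (2 * h + 1)} (hi : i ≠ 0) (hj : j ≠ 0) :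
    (calG (2 * h + 1)).Adj i j ↔ i ≠ j ∧ (i : ℕ) ≠ j + h ∧ (j : ℕ) ≠ i + h := by
  have hi' : (i : ℕ) ≠ 0 := Fin.val_ne_zero_iff.mpr hi
  have hj' : (j : ℕ) ≠ 0 := Fin.val_ne_zero_iff.mpr hj
  have hhalf : (2 * h + 1 - 1) / 2 = h := by omega
  rw [calG, SimpleGraph.fromRel_adj, hhalf, Nat.add_sub_cancel,
    add_half_mod_eq_iff (by omega) (by omega), add_half_mod_eq_iff (by omega) (by omega)]
  omega

theorem calG_neighbors_zero (n : ℕ) [NeZero n] : univ.filter ((calG n).Adj 0) = {0}ᶜ := by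
  ext j
  simp [calG, SimpleGraph.fromRel_adj, ne_comm]

theorem calG_neighbors_of_ne_zero {h : ℕ} {g : Fin (2 * h + 1)} (hg : g ≠ 0) :
    ∃ g' ≠ g, univ.filter ((calG (2 * h + 1)).Adj g) = {g, g'}ᶜ := by
  have hg' : (g : ℕ) ≠ 0 := Fin.val_ne_zero_iff.mpr hg
  refine ⟨⟨if (g : ℕ) ≤ h then g + h else g - h, by split <;> omega⟩, ?_, ?_⟩
  · simp only [ne_eq, Fin.ext_iff]
    split <;> omega
  · ext j
    rw [mem_filter_univ]
    by_cases hj : j = 0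
    · have hj' : (j : ℕ) = 0 := Fin.val_eq_zero_iff.mpr hj
      have hadj : (calG (2 * h + 1)).Adj g j := by
        rw [calG, SimpleGraph.fromRel_adj]
        exact ⟨fun hgj => hg (hgj.trans hj), Or.inl (Or.inr (Or.inl hj'))⟩
      simp only [hadj, true_iff, mem_compl, mem_insert, mem_singleton, Fin.ext_iff]
      split <;> omega
    · have hj' : (j : ℕ) ≠ 0 := Fin.val_ne_zero_iff.mpr hj
      rw [calG_adj_iff_of_ne_zero hg hj]
      simp only [mem_compl, mem_insert, mem_singleton, Fin.ext_iff]
      split <;> omega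

/-- ((K_{n-1} - M) + K_1) ∘ C_4 is not distance magic (n odd, n ≥ 3). -/
theorem calG_lex_C4_not_distance_magic (n : ℕ) (hn : 3 ≤ n) (hodd : Odd n) :
    ¬ IsDistanceMagic (lexProd (calG n) (circulant 4 1)) := by
  obtain ⟨h, rfl⟩ := hodd
  exact lexProd_circulant_four_not_isDistanceMagic _ 0 (by simpa using hn)
    (calG_neighbors_zero _) fun _ => calG_neighbors_of_ne_zero
end
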